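/- Let Γ be a set of formulas, α an atomic mapping for Γ^Sub, and U the simulation base for α. Then for every formula φ ∈ Γ^Sub, every base B with B ⊇ U, and each sign * ∈ {+,−}: ⊩*_B φ if and only if ⊢*_B p^φ. -/

import Mathlib

/-- Signs: `pos` for proof/assertion, `neg` for refutation/rejection. -/
inductive Sign where
  | pos
  | neg
deriving DecidableEq

/-- The dual of a sign. -/
def Sign.dual : Sign → Sign
  | .pos => .neg
  | .neg => .pos

/-- Formulas of the bilateral logic 2Int. -/
inductive Form where
  | atom : ℕ → Form
  | bot : Form
  | top : Form
  | and : Form → Form → Form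
  | or : Form → Form → Form
  | imp : Form → Form → Form
  | coimp : Form → Form → Form
deriving DecidableEq

/-- A premise of an atomic rule: the sign required (proof or refutation), the premise atom,
and the sets of dischargeable atomic proof assumptions and refutation assumptions. -/
structure Premise where
  sign : Sign
  concl : ℕ
  dischargePf : Set ℕ
  dischargeRf : Set ℕ

/-- An atomic rule: a list of premises, a marking as proof (`pos`) or refutation (`neg`) rule,
and an atomic conclusion. -/
structure AtomicRule where
  prems : List Premise
  sign : Sign
  concl : ℕ

/-- A bilateral atomic system (base) is a set of atomic rules. -/
abbrev Base := Set AtomicRule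

/-- `AtDeriv B s Γ Δ p` formalizes `Γ;Δ ⊢^s_B p`: there is a deduction in `B` of the atom `p`
whose open atomic proof assumptions are contained in `Γ` and open atomic refutation
assumptions in `Δ`, consisting of a single assumption of sign `s` or ending with a rule of
sign `s`. -/
inductive AtDeriv (B : Base) : Sign → Set ℕ → Set ℕ → ℕ → Prop
  | hypPos {Γ Δ : Set ℕ} {p : ℕ} : p ∈ Γ → AtDeriv B .pos Γ Δ p
  | hypNeg {Γ Δ : Set ℕ} {p : ℕ} : p ∈ Δ → AtDeriv B .neg Γ Δ p
  | app {Γ Δ : Set ℕ} {R : AtomicRule} (hR : R ∈ B)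
      (h : ∀ pr ∈ R.prems,
        AtDeriv B pr.sign (Γ ∪ pr.dischargePf) (Δ ∪ pr.dischargeRf) pr.concl) :
      AtDeriv B R.sign Γ Δ R.concl

/-- Bilateral validity (support) `⊩^s_B φ`, by recursion on the formula. -/
def Supp : Form → Base → Sign → Prop
  | .atom p, B, s => AtDeriv B s ∅ ∅ p
  | .bot, B, .pos => ∀ p : ℕ, AtDeriv B .pos ∅ ∅ p ∧ AtDeriv B .neg ∅ ∅ p
  | .bot, _, .neg => True
  | .top, _, .pos => True
  | .top, B, .neg => ∀ p : ℕ, AtDeriv B .pos ∅ ∅ p ∧ AtDeriv B .neg ∅ ∅ p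
  | .and φ ψ, B, .pos => Supp φ B .pos ∧ Supp ψ B .pos
  | .and φ ψ, B, .neg => ∀ C : Base, B ⊆ C → ∀ p : ℕ,
      (((∀ D : Base, C ⊆ D → Supp φ D .neg → AtDeriv D .pos ∅ ∅ p) ∧
        (∀ D : Base, C ⊆ D → Supp ψ D .neg → AtDeriv D .pos ∅ ∅ p)) →
        AtDeriv C .pos ∅ ∅ p) ∧
      (((∀ D : Base, C ⊆ D → Supp φ D .neg → AtDeriv D .neg ∅ ∅ p) ∧
        (∀ D : Base, C ⊆ D → Supp ψ D .neg → AtDeriv D .neg ∅ ∅ p)) →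
        AtDeriv C .neg ∅ ∅ p)
  | .or φ ψ, B, .pos => ∀ C : Base, B ⊆ C → ∀ p : ℕ,
      (((∀ D : Base, C ⊆ D → Supp φ D .pos → AtDeriv D .pos ∅ ∅ p) ∧
        (∀ D : Base, C ⊆ D → Supp ψ D .pos → AtDeriv D .pos ∅ ∅ p)) →
        AtDeriv C .pos ∅ ∅ p) ∧
      (((∀ D : Base, C ⊆ D → Supp φ D .pos → AtDeriv D .neg ∅ ∅ p) ∧
        (∀ D : Base, C ⊆ D → Supp ψ D .pos → AtDeriv D .neg ∅ ∅ p)) →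
        AtDeriv C .neg ∅ ∅ p)
  | .or φ ψ, B, .neg => Supp φ B .neg ∧ Supp ψ B .neg
  | .imp φ ψ, B, .pos => ∀ C : Base, B ⊆ C → Supp φ C .pos → Supp ψ C .pos
  | .imp φ ψ, B, .neg => Supp φ B .pos ∧ Supp ψ B .neg
  | .coimp φ ψ, B, .pos => Supp φ B .pos ∧ Supp ψ B .neg
  | .coimp φ ψ, B, .neg => ∀ C : Base, B ⊆ C → Supp ψ C .neg → Supp φ C .neg

/-- Subformulas of a formula. -/
def Form.subf : Form → Set Form
  | .atom p => {.atom p}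
  | .bot => {.bot}
  | .top => {.top}
  | .and φ ψ => insert (φ.and ψ) (φ.subf ∪ ψ.subf)
  | .or φ ψ => insert (φ.or ψ) (φ.subf ∪ ψ.subf)
  | .imp φ ψ => insert (φ.imp ψ) (φ.subf ∪ ψ.subf)
  | .coimp φ ψ => insert (φ.coimp ψ) (φ.subf ∪ ψ.subf)

/-- `Γ^Sub`: all subformulas of formulas in `Γ`. -/
def subSet (Γ : Set Form) : Set Form := ⋃ φ ∈ Γ, φ.subf

/-- premise requiring a proof of `a`, no discharge -/
def pp (a : ℕ) : Premise := ⟨.pos, a, ∅, ∅⟩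
/-- premise requiring a refutation of `a`, no discharge -/
def pn (a : ℕ) : Premise := ⟨.neg, a, ∅, ∅⟩

/-- The rules of the simulation base for the atomic mapping `α` on `S`. -/
inductive SimRule (S : Set Form) (α : Form → ℕ) : AtomicRule → Prop
  | impIpos {φ ψ : Form} : φ.imp ψ ∈ S →
      SimRule S α ⟨[⟨.pos, α ψ, {α φ}, ∅⟩], .pos, α (φ.imp ψ)⟩
  | impEpos {φ ψ : Form} : φ.imp ψ ∈ S →
      SimRule S α ⟨[pp (α (φ.imp ψ)), pp (α φ)], .pos, α ψ⟩
  | impIneg {φ ψ : Form} : φ.imp ψ ∈ S →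
      SimRule S α ⟨[pp (α φ), pn (α ψ)], .neg, α (φ.imp ψ)⟩
  | impE1neg {φ ψ : Form} : φ.imp ψ ∈ S →
      SimRule S α ⟨[pn (α (φ.imp ψ))], .pos, α φ⟩
  | impE2neg {φ ψ : Form} : φ.imp ψ ∈ S →
      SimRule S α ⟨[pn (α (φ.imp ψ))], .neg, α ψ⟩
  | coimpIpos {φ ψ : Form} : φ.coimp ψ ∈ S →
      SimRule S α ⟨[pp (α φ), pn (α ψ)], .pos, α (φ.coimp ψ)⟩
  | coimpE1pos {φ ψ : Form} : φ.coimp ψ ∈ S →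
      SimRule S α ⟨[pp (α (φ.coimp ψ))], .pos, α φ⟩
  | coimpE2pos {φ ψ : Form} : φ.coimp ψ ∈ S →
      SimRule S α ⟨[pp (α (φ.coimp ψ))], .neg, α ψ⟩
  | coimpIneg {φ ψ : Form} : φ.coimp ψ ∈ S →
      SimRule S α ⟨[⟨.neg, α φ, ∅, {α ψ}⟩], .neg, α (φ.coimp ψ)⟩
  | coimpEneg {φ ψ : Form} : φ.coimp ψ ∈ S →
      SimRule S α ⟨[pn (α (φ.coimp ψ)), pn (α ψ)], .neg, α φ⟩
  | andIpos {φ ψ : Form} : φ.and ψ ∈ S →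
      SimRule S α ⟨[pp (α φ), pp (α ψ)], .pos, α (φ.and ψ)⟩
  | andE1pos {φ ψ : Form} : φ.and ψ ∈ S →
      SimRule S α ⟨[pp (α (φ.and ψ))], .pos, α φ⟩
  | andE2pos {φ ψ : Form} : φ.and ψ ∈ S →
      SimRule S α ⟨[pp (α (φ.and ψ))], .pos, α ψ⟩
  | andI1neg {φ ψ : Form} : φ.and ψ ∈ S →
      SimRule S α ⟨[pn (α φ)], .neg, α (φ.and ψ)⟩
  | andI2neg {φ ψ : Form} : φ.and ψ ∈ S →
      SimRule S α ⟨[pn (α ψ)], .neg, α (φ.and ψ)⟩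
  | andEneg1 {φ ψ : Form} (q : ℕ) : φ.and ψ ∈ S →
      SimRule S α ⟨[pn (α (φ.and ψ)), ⟨.pos, q, ∅, {α φ}⟩, ⟨.pos, q, ∅, {α ψ}⟩], .pos, q⟩
  | andEneg2 {φ ψ : Form} (q : ℕ) : φ.and ψ ∈ S →
      SimRule S α ⟨[pn (α (φ.and ψ)), ⟨.neg, q, ∅, {α φ}⟩, ⟨.neg, q, ∅, {α ψ}⟩], .neg, q⟩
  | orI1pos {φ ψ : Form} : φ.or ψ ∈ S →
      SimRule S α ⟨[pp (α φ)], .pos, α (φ.or ψ)⟩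
  | orI2pos {φ ψ : Form} : φ.or ψ ∈ S →
      SimRule S α ⟨[pp (α ψ)], .pos, α (φ.or ψ)⟩
  | orEpos1 {φ ψ : Form} (q : ℕ) : φ.or ψ ∈ S →
      SimRule S α ⟨[pp (α (φ.or ψ)), ⟨.pos, q, {α φ}, ∅⟩, ⟨.pos, q, {α ψ}, ∅⟩], .pos, q⟩
  | orEpos2 {φ ψ : Form} (q : ℕ) : φ.or ψ ∈ S →
      SimRule S α ⟨[pp (α (φ.or ψ)), ⟨.neg, q, {α φ}, ∅⟩, ⟨.neg, q, {α ψ}, ∅⟩], .neg, q⟩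
  | orIneg {φ ψ : Form} : φ.or ψ ∈ S →
      SimRule S α ⟨[pn (α φ), pn (α ψ)], .neg, α (φ.or ψ)⟩
  | orE1neg {φ ψ : Form} : φ.or ψ ∈ S →
      SimRule S α ⟨[pn (α (φ.or ψ))], .neg, α φ⟩
  | orE2neg {φ ψ : Form} : φ.or ψ ∈ S →
      SimRule S α ⟨[pn (α (φ.or ψ))], .neg, α ψ⟩
  | topIpos : Form.top ∈ S → SimRule S α ⟨[], .pos, α .top⟩
  | botIneg : Form.bot ∈ S → SimRule S α ⟨[], .neg, α .bot⟩
  | botEpos1 (q : ℕ) : Form.bot ∈ S → SimRule S α ⟨[pp (α .bot)], .pos, q⟩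
  | botEpos2 (q : ℕ) : Form.bot ∈ S → SimRule S α ⟨[pp (α .bot)], .neg, q⟩
  | topEneg1 (q : ℕ) : Form.top ∈ S → SimRule S α ⟨[pn (α .top)], .pos, q⟩
  | topEneg2 (q : ℕ) : Form.top ∈ S → SimRule S α ⟨[pn (α .top)], .neg, q⟩

/-- The simulation base for `α` on `S`. -/
def simBase (S : Set Form) (α : Form → ℕ) : Base := {R | SimRule S α R}

/-!
Induction on `φ`. For the clauses of validity that are local in the base (`∧⁺`, `∨⁻`, `→⁻`, `↤⁺`,
atoms, `⊥`, `⊤`) the introduction and elimination rules of the simulation base translate validity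
of the components into derivability of their atoms and back. The clauses that quantify over
extensions (`∧⁻`, `∨⁺`, `→⁺`, `↤⁻`) need hypothetical derivations: to obtain a derivation of `q`
from the assumption `p^φ` out of "every extension validating `φ` derives `q`", extend the base by
the premiseless rule concluding `p^φ`, which validates `φ` by the induction hypothesis, and then
replace every use of that rule by the open assumption `p^φ`.
-/

namespace AtDeriv

variable {B C : Base} {s t : Sign} {Γ Δ : Set ℕ} {p q : ℕ}

theorem mono (hBC : B ⊆ C) (h : AtDeriv B s Γ Δ p) : AtDeriv C s Γ Δ p := by
  induction h with
  | hypPos h => exact .hypPos h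
  | hypNeg h => exact .hypNeg h
  | app hR _ ih => exact .app (hBC hR) ih

theorem of_rule {R : AtomicRule} (hR : R ∈ B)
    (h : ∀ pr ∈ R.prems, AtDeriv B pr.sign pr.dischargePf pr.dischargeRf pr.concl) :
    AtDeriv B R.sign ∅ ∅ R.concl :=
  .app hR fun pr hpr => by simpa using h pr hpr

def axiomRule (s : Sign) (q : ℕ) : AtomicRule := ⟨[], s, q⟩

theorem of_axiomRule : AtDeriv (insert (axiomRule s q) B) s Γ Δ q :=
  .app (R := axiomRule s q) (Set.mem_insert _ _) (by simp [axiomRule])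

theorem of_insert_axiomRule_pos (h : AtDeriv (insert (axiomRule .pos q) B) t Γ Δ p) :
    AtDeriv B t (insert q Γ) Δ p := by
  induction h with
  | hypPos h => exact .hypPos (Set.mem_insert_of_mem _ h)
  | hypNeg h => exact .hypNeg h
  | app hR _ ih =>
    rcases hR with rfl | hR
    · exact .hypPos (Set.mem_insert _ _)
    · exact .app hR fun pr hpr => Set.insert_union ▸ ih pr hpr

theorem of_insert_axiomRule_neg (h : AtDeriv (insert (axiomRule .neg q) B) t Γ Δ p) :
    AtDeriv B t Γ (insert q Δ) p := by
  induction h with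
  | hypPos h => exact .hypPos h
  | hypNeg h => exact .hypNeg (Set.mem_insert_of_mem _ h)
  | app hR _ ih =>
    rcases hR with rfl | hR
    · exact .hypNeg (Set.mem_insert _ _)
    · exact .app hR fun pr hpr => Set.insert_union ▸ ih pr hpr

end AtDeriv

theorem Form.mem_subf_self (φ : Form) : φ ∈ φ.subf := by
  cases φ <;> simp [Form.subf]

theorem Form.subf_subset_of_mem {θ φ : Form} (h : φ ∈ θ.subf) : φ.subf ⊆ θ.subf := by
  induction θ with
  | atom | bot | top => rw [Set.mem_singleton_iff.mp h]
  | and a b iha ihb | or a b iha ihb | imp a b iha ihb | coimp a b iha ihb =>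
    simp only [Form.subf, Set.mem_insert_iff, Set.mem_union] at h
    rcases h with rfl | h | h
    · exact subset_rfl
    · exact (iha h).trans (Set.subset_union_left.trans (Set.subset_insert _ _))
    · exact (ihb h).trans (Set.subset_union_right.trans (Set.subset_insert _ _))

def SubfClosed (S : Set Form) : Prop := ∀ φ ∈ S, φ.subf ⊆ S

theorem SubfClosed.mem_of_mem_subf {S : Set Form} (hS : SubfClosed S) {θ φ : Form}
    (hθ : θ ∈ S) (h : φ ∈ θ.subf) : φ ∈ S :=
  hS θ hθ (φ.mem_subf_self |> Form.subf_subset_of_mem h)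

theorem subfClosed_subSet (Γ : Set Form) : SubfClosed (subSet Γ) := by
  intro φ hφ
  obtain ⟨θ, hθ, hφθ⟩ := Set.mem_iUnion₂.mp hφ
  exact fun χ hχ => Set.mem_biUnion hθ (Form.subf_subset_of_mem hφθ hχ)

section Simulation

variable {S : Set Form} {α : Form → ℕ} {φ ψ : Form}

def Simulated (S : Set Form) (α : Form → ℕ) (φ : Form) : Prop :=
  ∀ B, simBase S α ⊆ B → ∀ s, Supp φ B s ↔ AtDeriv B s ∅ ∅ (α φ)

theorem Simulated.atDeriv_assume_pos (hφ : Simulated S α φ) {C : Base} (hC : simBase S α ⊆ C)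
    {t : Sign} {q : ℕ} (h : ∀ D, C ⊆ D → Supp φ D .pos → AtDeriv D t ∅ ∅ q) :
    AtDeriv C t {α φ} ∅ q := by
  have hCD := Set.subset_insert (AtDeriv.axiomRule .pos (α φ)) C
  have hφD := (hφ _ (hC.trans hCD) .pos).mpr .of_axiomRule
  simpa using (h _ hCD hφD).of_insert_axiomRule_pos

theorem Simulated.atDeriv_assume_neg (hφ : Simulated S α φ) {C : Base} (hC : simBase S α ⊆ C)
    {t : Sign} {q : ℕ} (h : ∀ D, C ⊆ D → Supp φ D .neg → AtDeriv D t ∅ ∅ q) :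
    AtDeriv C t ∅ {α φ} q := by
  have hCD := Set.subset_insert (AtDeriv.axiomRule .neg (α φ)) C
  have hφD := (hφ _ (hC.trans hCD) .neg).mpr .of_axiomRule
  simpa using (h _ hCD hφD).of_insert_axiomRule_neg

theorem simulated_atom {p : ℕ} (h : α (.atom p) = p) : Simulated S α (.atom p) := by
  intro B _ s
  rw [h]
  cases s <;> rfl

theorem simulated_bot (h : Form.bot ∈ S) : Simulated S α .bot := by
  intro B hB s
  cases s
  · exact ⟨fun hv => (hv _).1, fun hd q =>
      ⟨.of_rule (hB (.botEpos1 q h)) (by simpa [pp]),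
        .of_rule (hB (.botEpos2 q h)) (by simpa [pp])⟩⟩
  · exact iff_of_true trivial (.of_rule (hB (.botIneg h)) (by simp))

theorem simulated_top (h : Form.top ∈ S) : Simulated S α .top := by
  intro B hB s
  cases s
  · exact iff_of_true trivial (.of_rule (hB (.topIpos h)) (by simp))
  · exact ⟨fun hv => (hv _).2, fun hd q =>
      ⟨.of_rule (hB (.topEneg1 q h)) (by simpa [pn]),
        .of_rule (hB (.topEneg2 q h)) (by simpa [pn])⟩⟩

theorem simulated_and (h : φ.and ψ ∈ S) (hφ : Simulated S α φ) (hψ : Simulated S α ψ) :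
    Simulated S α (φ.and ψ) := by
  intro B hB s
  cases s
  · exact (and_congr (hφ B hB .pos) (hψ B hB .pos)).trans
      ⟨fun ⟨h1, h2⟩ => .of_rule (hB (.andIpos h)) (by simp [pp, h1, h2]), fun hd =>
        ⟨.of_rule (hB (.andE1pos h)) (by simpa [pp]),
          .of_rule (hB (.andE2pos h)) (by simpa [pp])⟩⟩
  · constructor
    · intro hv
      refine (hv B subset_rfl _).2 ⟨fun D hBD hφD => ?_, fun D hBD hψD => ?_⟩
      · exact .of_rule (hBD (hB (.andI1neg h)))
          (by simpa [pn] using (hφ D (hB.trans hBD) _).mp hφD)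
      · exact .of_rule (hBD (hB (.andI2neg h)))
          (by simpa [pn] using (hψ D (hB.trans hBD) _).mp hψD)
    · intro hd C hBC q
      have elim (t : Sign) (hφq : ∀ D, C ⊆ D → Supp φ D .neg → AtDeriv D t ∅ ∅ q)
          (hψq : ∀ D, C ⊆ D → Supp ψ D .neg → AtDeriv D t ∅ ∅ q) : AtDeriv C t ∅ ∅ q := by
        have hR : (⟨[pn (α (φ.and ψ)), ⟨t, q, ∅, {α φ}⟩, ⟨t, q, ∅, {α ψ}⟩], t, q⟩ : AtomicRule)
            ∈ C :=
          hBC <| hB <| by cases t; exacts [.andEneg1 q h, .andEneg2 q h]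
        exact .of_rule hR (by simp [pn, hd.mono hBC, hφ.atDeriv_assume_neg (hB.trans hBC) hφq,
          hψ.atDeriv_assume_neg (hB.trans hBC) hψq])
      exact ⟨fun ⟨h1, h2⟩ => elim .pos h1 h2, fun ⟨h1, h2⟩ => elim .neg h1 h2⟩

theorem simulated_or (h : φ.or ψ ∈ S) (hφ : Simulated S α φ) (hψ : Simulated S α ψ) :
    Simulated S α (φ.or ψ) := by
  intro B hB s
  cases s
  · constructor
    · intro hv
      refine (hv B subset_rfl _).1 ⟨fun D hBD hφD => ?_, fun D hBD hψD => ?_⟩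
      · exact .of_rule (hBD (hB (.orI1pos h)))
          (by simpa [pp] using (hφ D (hB.trans hBD) _).mp hφD)
      · exact .of_rule (hBD (hB (.orI2pos h)))
          (by simpa [pp] using (hψ D (hB.trans hBD) _).mp hψD)
    · intro hd C hBC q
      have elim (t : Sign) (hφq : ∀ D, C ⊆ D → Supp φ D .pos → AtDeriv D t ∅ ∅ q)
          (hψq : ∀ D, C ⊆ D → Supp ψ D .pos → AtDeriv D t ∅ ∅ q) : AtDeriv C t ∅ ∅ q := by
        have hR : (⟨[pp (α (φ.or ψ)), ⟨t, q, {α φ}, ∅⟩, ⟨t, q, {α ψ}, ∅⟩], t, q⟩ : AtomicRule)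
            ∈ C :=
          hBC <| hB <| by cases t; exacts [.orEpos1 q h, .orEpos2 q h]
        exact .of_rule hR (by simp [pp, hd.mono hBC, hφ.atDeriv_assume_pos (hB.trans hBC) hφq,
          hψ.atDeriv_assume_pos (hB.trans hBC) hψq])
      exact ⟨fun ⟨h1, h2⟩ => elim .pos h1 h2, fun ⟨h1, h2⟩ => elim .neg h1 h2⟩
  · exact (and_congr (hφ B hB .neg) (hψ B hB .neg)).trans
      ⟨fun ⟨h1, h2⟩ => .of_rule (hB (.orIneg h)) (by simp [pn, h1, h2]), fun hd =>
        ⟨.of_rule (hB (.orE1neg h)) (by simpa [pn]),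
          .of_rule (hB (.orE2neg h)) (by simpa [pn])⟩⟩

theorem simulated_imp (h : φ.imp ψ ∈ S) (hφ : Simulated S α φ) (hψ : Simulated S α ψ) :
    Simulated S α (φ.imp ψ) := by
  intro B hB s
  cases s
  · constructor
    · intro hv
      have hψφ := hφ.atDeriv_assume_pos hB fun D hBD hφD =>
        (hψ D (hB.trans hBD) .pos).mp (hv D hBD hφD)
      exact .of_rule (hB (.impIpos h)) (by simpa using hψφ)
    · intro hd C hBC hφC
      refine (hψ C (hB.trans hBC) .pos).mpr (.of_rule (hBC (hB (.impEpos h))) ?_)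
      simp [pp, hd.mono hBC, (hφ C (hB.trans hBC) .pos).mp hφC]
  · exact (and_congr (hφ B hB .pos) (hψ B hB .neg)).trans
      ⟨fun ⟨h1, h2⟩ => .of_rule (hB (.impIneg h)) (by simp [pp, pn, h1, h2]), fun hd =>
        ⟨.of_rule (hB (.impE1neg h)) (by simpa [pn]), .of_rule (hB (.impE2neg h)) (by simpa [pn])⟩⟩

theorem simulated_coimp (h : φ.coimp ψ ∈ S) (hφ : Simulated S α φ) (hψ : Simulated S α ψ) :
    Simulated S α (φ.coimp ψ) := by
  intro B hB s
  cases s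
  · exact (and_congr (hφ B hB .pos) (hψ B hB .neg)).trans
      ⟨fun ⟨h1, h2⟩ => .of_rule (hB (.coimpIpos h)) (by simp [pp, pn, h1, h2]), fun hd =>
        ⟨.of_rule (hB (.coimpE1pos h)) (by simpa [pp]),
          .of_rule (hB (.coimpE2pos h)) (by simpa [pp])⟩⟩
  · constructor
    · intro hv
      have hφψ := hψ.atDeriv_assume_neg hB fun D hBD hψD =>
        (hφ D (hB.trans hBD) .neg).mp (hv D hBD hψD)
      exact .of_rule (hB (.coimpIneg h)) (by simpa using hφψ)
    · intro hd C hBC hψC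
      refine (hφ C (hB.trans hBC) .neg).mpr (.of_rule (hBC (hB (.coimpEneg h))) ?_)
      simp [pn, hd.mono hBC, (hψ C (hB.trans hBC) .neg).mp hψC]

theorem simulated_of_mem (hS : SubfClosed S) (hatom : ∀ p, Form.atom p ∈ S → α (.atom p) = p)
    (hmem : φ ∈ S) : Simulated S α φ := by
  induction φ with
  | atom p => exact simulated_atom (hatom p hmem)
  | bot => exact simulated_bot hmem
  | top => exact simulated_top hmem
  | and φ ψ ihφ ihψ | or φ ψ ihφ ihψ | imp φ ψ ihφ ihψ | coimp φ ψ ihφ ihψ =>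
    have hφ := ihφ (hS.mem_of_mem_subf hmem (by simp [Form.subf, φ.mem_subf_self]))
    have hψ := ihψ (hS.mem_of_mem_subf hmem (by simp [Form.subf, ψ.mem_subf_self]))
    first
    | exact simulated_and hmem hφ hψ
    | exact simulated_or hmem hφ hψ
    | exact simulated_imp hmem hφ hψ
    | exact simulated_coimp hmem hφ hψ

end Simulation

theorem simulation_base_lemma_general (Γ : Set Form) (α : Form → ℕ)
    (hatom : ∀ p : ℕ, Form.atom p ∈ subSet Γ → α (Form.atom p) = p)
    (φ : Form) (hφ : φ ∈ subSet Γ)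
    (B : Base) (hB : simBase (subSet Γ) α ⊆ B) (s : Sign) :
    Supp φ B s ↔ AtDeriv B s ∅ ∅ (α φ) :=
  simulated_of_mem (subfClosed_subSet Γ) hatom hφ B hB s

theorem simulation_base_lemma (Γ : Set Form) (α : Form → ℕ)
    (hinj : Set.InjOn α (subSet Γ))
    (hatom : ∀ p : ℕ, Form.atom p ∈ subSet Γ → α (Form.atom p) = p)
    (φ : Form) (hφ : φ ∈ subSet Γ)
    (B : Base) (hB : simBase (subSet Γ) α ⊆ B) (s : Sign) :
    Supp φ B s ↔ AtDeriv B s ∅ ∅ (α φ) :=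
  simulation_base_lemma_general Γ α hatom φ hφ B hB s
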